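/- Let K ⊆ ℝ^n be a compact convex set, let ε > 0 be such that ε·n is a positive integer, and for I ⊆ [n] write K(I) = K ∩ {x ∈ ℝ^n : x_i ∈ [−1,1] for all i ∈ I}. Suppose E_{g ~ Unif({−1,1}^n)} [ min_{I ⊆ [n], |I| = ε·n} max_{x ∈ K(I)} ⟨x, g⟩ ] = c·n for some c > 1, and let R = max_{x ∈ K} ‖x‖₂. Then for any function y assigning to each g ∈ {−1,1}^n a maximizer y(g) of x ↦ ⟨x, g⟩ over K([n]), the probability over uniformly random g ∈ {−1,1}^n that |{i ∈ [n] : |y(g)_i| = 1}| ≥ ε·n is at least (c−1)²·n / R². -/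

import Mathlib

open Matrix MeasureTheory ProbabilityTheory
open scoped NNReal Kronecker

/-- The spectral (operator) norm of a real square matrix. -/
noncomputable def specNorm {n : Type*} [Fintype n] [DecidableEq n] (A : Matrix n n ℝ) : ℝ :=
  ‖Matrix.toEuclideanCLM (𝕜 := ℝ) A‖

/-- The Frobenius norm of a real square matrix: `√(Tr(Aᵀ A))`. -/
noncomputable def frobNorm {n : Type*} [Fintype n] (A : Matrix n n ℝ) : ℝ :=
  Real.sqrt ((Aᵀ * A).trace)

/-- The trace inner product `⟨A, B⟩ = Tr(Aᵀ B)` of real square matrices. -/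
noncomputable def mInner {n : Type*} [Fintype n] (A B : Matrix n n ℝ) : ℝ :=
  (Aᵀ * B).trace

/-- The Euclidean (ℓ₂) norm of a vector in `ℝⁿ`. -/
noncomputable def l2norm {n : ℕ} (x : Fin n → ℝ) : ℝ := Real.sqrt (∑ i, (x i) ^ 2)

/-- The sign cube `{-1, 1}ⁿ` as a finite set of vectors in `ℝⁿ`. -/
noncomputable def signs (n : ℕ) : Finset (Fin n → ℝ) :=
  Fintype.piFinset fun _ => ({-1, 1} : Finset ℝ)

/-- The distribution of a `d × D` random matrix with i.i.d. Gaussian entries of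
mean `0` and variance `1/d`. -/
noncomputable def gaussMat (d D : ℕ) : Measure (Fin d → Fin D → ℝ) :=
  Measure.pi fun _ => Measure.pi fun _ => gaussianReal 0 (d : ℝ≥0)⁻¹

/-- The nuclear (trace) norm `Tr √(Mᵀ M)` of a real square matrix. -/
noncomputable def nucNorm {n : Type*} [Fintype n] [DecidableEq n] (M : Matrix n n ℝ) : ℝ :=
  ((Matrix.posSemidef_conjTranspose_mul_self M).1.eigenvectorUnitary.1 *
    Matrix.diagonal (Real.sqrt ∘ (Matrix.posSemidef_conjTranspose_mul_self M).1.eigenvalues) *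
    (star (Matrix.posSemidef_conjTranspose_mul_self M).1.eigenvectorUnitary : Matrix n n ℝ)).trace

/-- The dual norm of a norm `N` on `ℝᵐ`: `‖y‖* = sup {⟨x, y⟩ : N x ≤ 1}`. -/
noncomputable def dualNorm {m : ℕ} (N : (Fin m → ℝ) → ℝ) (y : Fin m → ℝ) : ℝ :=
  sSup ((fun x => x ⬝ᵥ y) '' {x | N x ≤ 1})

/-- The binary entropy function (base 2). -/
noncomputable def binH (p : ℝ) : ℝ := -p * Real.logb 2 p - (1 - p) * Real.logb 2 (1 - p)

/-!
For every sign vector `g`, Cauchy–Schwarz bounds the restricted width by `R √n`. If `y(g)` has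
fewer than `k` coordinates equal to `±1`, choose `I` of size `k` containing all of them: near
`y(g)` the body `K(I)` coincides with `K ∩ [-1,1]ⁿ`, so by convexity `y(g)` still maximizes
`⟨·, g⟩` on `K(I)` and the width at `g` is at most `⟨y(g), g⟩ ≤ n`. Averaging over `g`, the
fraction `p` of good sign vectors satisfies `c n ≤ p R √n + (1 - p) n`, so `p R √n ≥ (c - 1) n`,
while `(c - 1) √n ≤ c √n ≤ R`; multiplying the two gives `p R² ≥ (c - 1)² n`.
-/

open Finset Set

variable {n : ℕ}

/-- The paper's `K(I)`. -/
def cubeRestrict (K : Set (Fin n → ℝ)) (I : Finset (Fin n)) : Set (Fin n → ℝ) :=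
  K ∩ {x | ∀ i ∈ I, x i ∈ Icc (-1 : ℝ) 1}

noncomputable def supportFn (S : Set (Fin n → ℝ)) (g : Fin n → ℝ) : ℝ :=
  sSup ((fun x => x ⬝ᵥ g) '' S)

/-- The paper's `min_{|I| = k} max_{x ∈ K(I)} ⟨x, g⟩`. -/
noncomputable def restrictedWidth (K : Set (Fin n → ℝ)) (k : ℕ) (g : Fin n → ℝ) : ℝ :=
  sInf {r : ℝ | ∃ I : Finset (Fin n), I.card = k ∧ r = supportFn (cubeRestrict K I) g}

theorem convex_cubeRestrict {K : Set (Fin n → ℝ)} (hK : Convex ℝ K) (I : Finset (Fin n)) :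
    Convex ℝ (cubeRestrict K I) :=
  hK.inter (convex_pi fun _ _ => convex_Icc _ _)

theorem concaveOn_dotProduct {s : Set (Fin n → ℝ)} (hs : Convex ℝ s) (g : Fin n → ℝ) :
    ConcaveOn ℝ s fun x => x ⬝ᵥ g :=
  ⟨hs, fun _ _ _ _ _ _ _ _ _ => by simp only [add_dotProduct, smul_dotProduct, le_refl]⟩

theorem dotProduct_le_l2norm_mul (x g : Fin n → ℝ) : x ⬝ᵥ g ≤ l2norm x * l2norm g :=
  Real.sum_mul_le_sqrt_mul_sqrt univ x g

theorem abs_eq_one_of_mem_signs {g : Fin n → ℝ} (hg : g ∈ signs n) (i : Fin n) : |g i| = 1 := by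
  rcases (by simpa [signs] using Fintype.mem_piFinset.mp hg i : g i = -1 ∨ g i = 1) with h | h <;>
    simp [h]

theorem l2norm_of_mem_signs {g : Fin n → ℝ} (hg : g ∈ signs n) : l2norm g = √n := by
  simp [l2norm, ← sq_abs (g _), abs_eq_one_of_mem_signs hg]

theorem card_signs (n : ℕ) : (signs n).card = 2 ^ n := by
  simp [signs, Fintype.card_piFinset, Finset.card_pair (by norm_num : (-1 : ℝ) ≠ 1)]

theorem dotProduct_le_card_of_abs_le_one {x g : Fin n → ℝ} (hx : ∀ i, |x i| ≤ 1)
    (hg : ∀ i, |g i| ≤ 1) : x ⬝ᵥ g ≤ n := by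
  calc x ⬝ᵥ g = ∑ i, x i * g i := rfl
    _ ≤ ∑ _i : Fin n, (1 : ℝ) := sum_le_sum fun i _ =>
        (le_abs_self _).trans (by rw [abs_mul]; exact mul_le_one₀ (hx i) (abs_nonneg _) (hg i))
    _ = n := by simp

theorem restrictedWidth_le_supportFn (K : Set (Fin n → ℝ)) {k : ℕ} (g : Fin n → ℝ)
    {I : Finset (Fin n)} (hI : I.card = k) :
    restrictedWidth K k g ≤ supportFn (cubeRestrict K I) g :=
  csInf_le ((Set.finite_range fun I => supportFn (cubeRestrict K I) g).subset
    (by rintro _ ⟨I, -, rfl⟩; exact ⟨I, rfl⟩)).bddBelow ⟨I, hI, rfl⟩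

theorem restrictedWidth_eq_zero_of_lt (K : Set (Fin n → ℝ)) {k : ℕ} (hk : n < k)
    (g : Fin n → ℝ) :
    restrictedWidth K k g = 0 := by
  have hempty : {r : ℝ | ∃ I : Finset (Fin n), I.card = k ∧
      r = supportFn (cubeRestrict K I) g} = ∅ :=
    Set.eq_empty_of_forall_notMem fun _ ⟨I, hI, _⟩ => by
      have := I.card_le_univ
      simp only [Fintype.card_fin] at this
      omega
  rw [restrictedWidth, hempty, Real.sInf_empty]

theorem supportFn_le_mul_sqrt {K : Set (Fin n → ℝ)} {R : ℝ} (hR : 0 ≤ R)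
    (hK : ∀ x ∈ K, l2norm x ≤ R) {g : Fin n → ℝ} (hg : g ∈ signs n) :
    supportFn K g ≤ R * √n := by
  refine Real.sSup_le ?_ (by positivity)
  rintro _ ⟨x, hx, rfl⟩
  calc x ⬝ᵥ g ≤ l2norm x * l2norm g := dotProduct_le_l2norm_mul x g
    _ ≤ R * √n := by
      rw [l2norm_of_mem_signs hg]
      exact mul_le_mul_of_nonneg_right (hK x hx) (Real.sqrt_nonneg _)

/-- Near `y` the sets `K(I)` and `K ∩ [-1,1]ⁿ` agree, and a local maximum of a linear functional
on a convex set is global. -/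
theorem isMaxOn_cubeRestrict_of_tight_subset {K : Set (Fin n → ℝ)} (hK : Convex ℝ K)
    {g y : Fin n → ℝ} {I : Finset (Fin n)} (hyK : y ∈ K ∩ {x | ∀ i, x i ∈ Icc (-1 : ℝ) 1})
    (hmax : ∀ x ∈ K ∩ {x | ∀ i, x i ∈ Icc (-1 : ℝ) 1}, x ⬝ᵥ g ≤ y ⬝ᵥ g)
    (hI : ∀ i ∉ I, |y i| < 1) :
    IsMaxOn (fun x => x ⬝ᵥ g) (cubeRestrict K I) y := by
  have hyI : y ∈ cubeRestrict K I := ⟨hyK.1, fun i _ => hyK.2 i⟩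
  have hnear : ∀ᶠ x in nhds y, ∀ i, i ∉ I → |x i| < 1 :=
    Filter.eventually_all.2 fun i => by
      by_cases hi : i ∈ I
      · exact Filter.Eventually.of_forall fun _ h => absurd hi h
      · filter_upwards [(isOpen_lt (continuous_apply i).abs continuous_const).mem_nhds (hI i hi)]
          with x hx using fun _ => hx
  have hlocal : IsLocalMaxOn (fun x => x ⬝ᵥ g) (cubeRestrict K I) y := by
    filter_upwards [nhdsWithin_le_nhds hnear, self_mem_nhdsWithin] with x hx ⟨hxK, hxI⟩
    refine hmax x ⟨hxK, fun i => ?_⟩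
    by_cases hi : i ∈ I
    · exact hxI i hi
    · exact abs_le.mp (hx i hi).le
  exact IsMaxOn.of_isLocalMaxOn_of_concaveOn hyI hlocal
    (concaveOn_dotProduct (convex_cubeRestrict hK I) g)

theorem restrictedWidth_le_of_ncard_tight_lt {K : Set (Fin n → ℝ)} (hK : Convex ℝ K) {k : ℕ}
    (hkn : k ≤ n) {g y : Fin n → ℝ} (hg : g ∈ signs n)
    (hyK : y ∈ K ∩ {x | ∀ i, x i ∈ Icc (-1 : ℝ) 1})
    (hmax : ∀ x ∈ K ∩ {x | ∀ i, x i ∈ Icc (-1 : ℝ) 1}, x ⬝ᵥ g ≤ y ⬝ᵥ g)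
    (htight : {i | |y i| = 1}.ncard < k) :
    restrictedWidth K k g ≤ n := by
  obtain ⟨I, hTI, -, hIk⟩ := Finset.exists_subsuperset_card_eq (n := k)
    (Finset.subset_univ {i | |y i| = 1}.toFinset)
    (by rw [← Set.ncard_eq_toFinset_card']; exact htight.le) (by simpa using hkn)
  have hI : ∀ i ∉ I, |y i| < 1 := fun i hi =>
    (abs_le.mpr (hyK.2 i)).lt_of_ne fun h => hi (hTI (Set.mem_toFinset.mpr h))
  have hyI : IsGreatest ((fun x => x ⬝ᵥ g) '' cubeRestrict K I) (y ⬝ᵥ g) :=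
    ⟨⟨y, ⟨hyK.1, fun i _ => hyK.2 i⟩, rfl⟩, by
      rintro _ ⟨x, hx, rfl⟩
      exact isMaxOn_cubeRestrict_of_tight_subset hK hyK hmax hI hx⟩
  calc restrictedWidth K k g ≤ supportFn (cubeRestrict K I) g :=
        restrictedWidth_le_supportFn K g hIk
    _ = y ⬝ᵥ g := hyI.csSup_eq
    _ ≤ n := dotProduct_le_card_of_abs_le_one (fun i => abs_le.mpr (hyK.2 i))
        (fun i => (abs_eq_one_of_mem_signs hg i).le)

theorem sub_one_sq_mul_card_le_card_filter_mul_sq {α : Type*} (S : Finset α) (P : α → Prop)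
    [DecidablePred P] (W : α → ℝ) {a b c : ℝ} (hb : 0 ≤ b) (hc : 1 ≤ c)
    (hsum : ∑ g ∈ S, W g = c * b * S.card)
    (hle : ∀ g ∈ S, W g ≤ a) (hbad : ∀ g ∈ S, ¬ P g → W g ≤ b) :
    (c - 1) ^ 2 * b ^ 2 * S.card ≤ (S.filter P).card * a ^ 2 := by
  rcases S.eq_empty_or_nonempty with rfl | hS
  · simp
  have hP : ∑ g ∈ S.filter P, W g ≤ (S.filter P).card * a := by
    simpa using Finset.sum_le_card_nsmul _ W a fun g hg => hle g (Finset.mem_filter.mp hg).1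
  have hnotP : ∑ g ∈ S.filter (¬ P ·), W g ≤ (S.filter (¬ P ·)).card * b := by
    simpa using Finset.sum_le_card_nsmul _ W b fun g hg =>
      hbad g (Finset.mem_filter.mp hg).1 (Finset.mem_filter.mp hg).2
  have hcard : ((S.filter P).card : ℝ) + (S.filter (¬ P ·)).card = S.card := by
    exact_mod_cast Finset.card_filter_add_card_filter_not P
  have hgain : (c - 1) * b * S.card ≤ (S.filter P).card * a := by
    nlinarith [Finset.sum_filter_add_sum_filter_not S P W,
      Nat.cast_nonneg (α := ℝ) (S.filter P).card]
  have hca : (c - 1) * b ≤ a := by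
    have hN : (0 : ℝ) < S.card := by exact_mod_cast hS.card_pos
    have hall : ∑ g ∈ S, W g ≤ S.card * a := by
      simpa using Finset.sum_le_card_nsmul _ W a hle
    nlinarith
  calc (c - 1) ^ 2 * b ^ 2 * S.card = ((c - 1) * b) * ((c - 1) * b * S.card) := by ring
    _ ≤ a * ((S.filter P).card * a) :=
        mul_le_mul hca hgain (by have := hS.card_pos; positivity) (hca.trans' (by nlinarith))
    _ = (S.filter P).card * a ^ 2 := by ring

theorem width_to_coloring_general (n k : ℕ) (c R : ℝ)
    (K : Set (Fin n → ℝ)) (hKconv : Convex ℝ K)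
    (hc : 1 < c)
    (hwidth : (∑ g ∈ signs n,
        sInf {r : ℝ | ∃ I : Finset (Fin n), I.card = k ∧
          r = sSup ((fun x => x ⬝ᵥ g) ''
            (K ∩ {x | ∀ i ∈ I, x i ∈ Set.Icc (-1 : ℝ) 1}))}) / 2 ^ n = c * n)
    (hR : IsGreatest (l2norm '' K) R)
    (y : (Fin n → ℝ) → (Fin n → ℝ))
    (hy : ∀ g ∈ signs n,
      y g ∈ K ∩ {x | ∀ i, x i ∈ Set.Icc (-1 : ℝ) 1} ∧
      ∀ x ∈ K ∩ {x | ∀ i, x i ∈ Set.Icc (-1 : ℝ) 1}, x ⬝ᵥ g ≤ y g ⬝ᵥ g) :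
    (c - 1) ^ 2 * n / R ^ 2 ≤
      (Set.ncard {g : Fin n → ℝ | g ∈ signs n ∧
        k ≤ Set.ncard {i : Fin n | |y g i| = 1}} : ℝ) / 2 ^ n := by
  classical
  rcases Nat.eq_zero_or_pos n with rfl | hn
  · simp
  have hsum : ∑ g ∈ signs n, restrictedWidth K k g = c * n * (signs n).card := by
    rw [card_signs, Nat.cast_pow, Nat.cast_two]
    exact (div_eq_iff (by positivity)).mp hwidth
  have hkn : k ≤ n := by
    by_contra! hlt
    simp only [restrictedWidth_eq_zero_of_lt K hlt, Finset.sum_const_zero, card_signs] at hsum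
    have : (0 : ℝ) < c * n * (2 ^ n : ℕ) :=
      mul_pos (mul_pos (by linarith) (by exact_mod_cast hn)) (by positivity)
    linarith
  obtain ⟨I, -, hI⟩ := Finset.exists_subset_card_eq (s := (Finset.univ : Finset (Fin n)))
    (by simpa using hkn)
  have hR0 : 0 ≤ R := by
    obtain ⟨x, -, rfl⟩ := hR.1
    exact Real.sqrt_nonneg _
  have hcount := sub_one_sq_mul_card_le_card_filter_mul_sq (signs n)
    (fun g => k ≤ {i | |y g i| = 1}.ncard) (restrictedWidth K k) (a := R * √n)
    (Nat.cast_nonneg n) hc.le hsum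
    (fun g hg => (restrictedWidth_le_supportFn K g hI).trans
      (supportFn_le_mul_sqrt hR0 (fun x hx => hR.2 ⟨x, hx.1, rfl⟩) hg))
    (fun g hg hfew => restrictedWidth_le_of_ncard_tight_lt hKconv hkn hg (hy g hg).1
      (hy g hg).2 (not_le.mp hfew))
  rw [mul_pow, Real.sq_sqrt (Nat.cast_nonneg n), card_signs] at hcount
  rw [← Finset.coe_filter, Set.ncard_coe_finset]
  rcases hR0.eq_or_lt with rfl | hRpos
  · rw [zero_pow two_ne_zero, div_zero]
    positivity
  rw [div_le_div_iff₀ (by positivity) (by positivity)]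
  push_cast at hcount
  exact le_of_mul_le_mul_right (by linarith) (Nat.cast_pos.mpr hn : (0 : ℝ) < n)

/-- **Width to coloring** (Proposition 4.1).  Let `K ⊆ ℝⁿ` be compact and convex, `ε n = k`
a positive integer, and suppose the expected value over uniform `g ∈ {±1}ⁿ` of
`min_{|I| = εn} max_{x ∈ K(I)} ⟨x, g⟩` equals `c n` with `c > 1`, where
`K(I) = K ∩ {x : xᵢ ∈ [-1,1] ∀ i ∈ I}`.  Let `R = max_{x ∈ K} ‖x‖₂`.  Then for any choice
`y(g)` of maximizer of `⟨·, g⟩` over `K([n])`, with probability at least `(c-1)² n / R²`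
over uniform `g`, at least `ε n` coordinates of `y(g)` have absolute value `1`. -/
theorem width_to_coloring (n k : ℕ) (ε c R : ℝ)
    (hk : 0 < k) (hε : 0 < ε) (hεn : (k : ℝ) = ε * n)
    (K : Set (Fin n → ℝ)) (hKcpt : IsCompact K) (hKconv : Convex ℝ K)
    (hc : 1 < c)
    (hwidth : (∑ g ∈ signs n,
        sInf {r : ℝ | ∃ I : Finset (Fin n), I.card = k ∧
          r = sSup ((fun x => x ⬝ᵥ g) ''
            (K ∩ {x | ∀ i ∈ I, x i ∈ Set.Icc (-1 : ℝ) 1}))}) / 2 ^ n = c * n)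
    (hR : IsGreatest (l2norm '' K) R)
    (y : (Fin n → ℝ) → (Fin n → ℝ))
    (hy : ∀ g ∈ signs n,
      y g ∈ K ∩ {x | ∀ i, x i ∈ Set.Icc (-1 : ℝ) 1} ∧
      ∀ x ∈ K ∩ {x | ∀ i, x i ∈ Set.Icc (-1 : ℝ) 1}, x ⬝ᵥ g ≤ y g ⬝ᵥ g) :
    (c - 1) ^ 2 * n / R ^ 2 ≤
      (Set.ncard {g : Fin n → ℝ | g ∈ signs n ∧
        k ≤ Set.ncard {i : Fin n | |y g i| = 1}} : ℝ) / 2 ^ n :=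
  width_to_coloring_general n k c R K hKconv hc hwidth hR y hy
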